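/- arXiv:2306.01154 — 2 statements merged into one kernel-verified Lean document; each statement's English description precedes it below -/
import Mathlib

section
/- Let V ∈ ℝ^{d×K} have orthonormal columns, Δ ∈ ℝ^{d×K} satisfy VVᵀΔ = Δ, and let V₁ ∈ ℝ^{d×K} have orthonormal columns with ‖VVᵀ − V₁V₁ᵀ‖_F ≤ 1/2. Then, with V₂ an orthonormal completion of V₁ (so V₁V₁ᵀ + V₂V₂ᵀ = I), we have ‖V₂ᵀΔ‖_F ≤ (1/2)‖Δ‖_F ≤ ‖V₁ᵀΔ‖_F. -/
/-!
Since the columns of `Δ` lie in the range of `VVᵀ` and `V₁V₁ᵀ + V₂V₂ᵀ = I`, we have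
`V₂V₂ᵀΔ = (VVᵀ − V₁V₁ᵀ)Δ`; as `V₂` is an isometry, submultiplicativity of the Frobenius norm gives
`‖V₂ᵀΔ‖_F ≤ ‖VVᵀ − V₁V₁ᵀ‖_F ‖Δ‖_F ≤ ‖Δ‖_F / 2`. The lower bound then follows from the Pythagorean
identity `‖V₁ᵀΔ‖_F² + ‖V₂ᵀΔ‖_F² = ‖Δ‖_F²`.
-/

open Matrix

/-- Frobenius norm of a real matrix. -/
noncomputable def frob {a b : ℕ} (A : Matrix (Fin a) (Fin b) ℝ) : ℝ :=
  Real.sqrt (∑ i, ∑ j, (A i j) ^ 2)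

open scoped Matrix.Norms.Frobenius

section Frobenius

variable {a b c : ℕ}

theorem frob_eq_frobenius_norm (A : Matrix (Fin a) (Fin b) ℝ) : frob A = ‖A‖ := by
  simp only [frob, frobenius_norm_def, Real.norm_eq_abs, Real.rpow_two, sq_abs,
    Real.sqrt_eq_rpow, one_div]

theorem frob_nonneg (A : Matrix (Fin a) (Fin b) ℝ) : 0 ≤ frob A :=
  Real.sqrt_nonneg _

theorem frob_mul_le (A : Matrix (Fin a) (Fin b) ℝ) (B : Matrix (Fin b) (Fin c) ℝ) :
    frob (A * B) ≤ frob A * frob B := by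
  simpa only [frob_eq_frobenius_norm] using frobenius_norm_mul A B

theorem frob_sq_eq_trace (A : Matrix (Fin a) (Fin b) ℝ) : frob A ^ 2 = trace (Aᵀ * A) := by
  rw [frob, Real.sq_sqrt (by positivity), Finset.sum_comm]
  simp only [trace, diag, mul_apply, transpose_apply, sq]

theorem frob_mul_of_transpose_mul_self_eq_one {U : Matrix (Fin a) (Fin b) ℝ} (hU : Uᵀ * U = 1)
    (X : Matrix (Fin b) (Fin c) ℝ) : frob (U * X) = frob X := by
  refine (sq_eq_sq₀ (frob_nonneg _) (frob_nonneg _)).1 ?_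
  rw [frob_sq_eq_trace, frob_sq_eq_trace, transpose_mul, Matrix.mul_assoc, ← Matrix.mul_assoc Uᵀ,
    hU, Matrix.one_mul]

theorem frob_transpose_mul_sq_add_of_mul_transpose_add_eq_one {m n : ℕ}
    {V₁ : Matrix (Fin a) (Fin m) ℝ} {V₂ : Matrix (Fin a) (Fin n) ℝ}
    (hcomp : V₁ * V₁ᵀ + V₂ * V₂ᵀ = 1) (M : Matrix (Fin a) (Fin b) ℝ) :
    frob (V₁ᵀ * M) ^ 2 + frob (V₂ᵀ * M) ^ 2 = frob M ^ 2 := by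
  have hgram : ∀ {k : ℕ} (W : Matrix (Fin a) (Fin k) ℝ), (Wᵀ * M)ᵀ * (Wᵀ * M) = Mᵀ * (W * Wᵀ) * M :=
    fun W => by simp only [transpose_mul, transpose_transpose, Matrix.mul_assoc]
  rw [frob_sq_eq_trace, frob_sq_eq_trace, frob_sq_eq_trace, hgram, hgram, ← trace_add,
    ← Matrix.add_mul, ← Matrix.mul_add, hcomp, Matrix.mul_one]

end Frobenius

theorem projection_split_bound_general {d K : ℕ}
    (V V₁ : Matrix (Fin d) (Fin K) ℝ) (V₂ : Matrix (Fin d) (Fin (d - K)) ℝ)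
    (Δ : Matrix (Fin d) (Fin K) ℝ)
    (hV₂ : V₂ᵀ * V₂ = 1)
    (hcomp : V₁ * V₁ᵀ + V₂ * V₂ᵀ = 1)
    (hΔ : V * Vᵀ * Δ = Δ)
    (hclose : frob (V * Vᵀ - V₁ * V₁ᵀ) ≤ 1 / 2) :
    frob (V₂ᵀ * Δ) ≤ (1 / 2) * frob Δ ∧ (1 / 2) * frob Δ ≤ frob (V₁ᵀ * Δ) := by
  have hres : V₂ * (V₂ᵀ * Δ) = (V * Vᵀ - V₁ * V₁ᵀ) * Δ := by
    rw [← Matrix.mul_assoc, Matrix.sub_mul, hΔ, eq_sub_of_add_eq' hcomp, Matrix.sub_mul,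
      Matrix.one_mul]
  have hupper : frob (V₂ᵀ * Δ) ≤ (1 / 2) * frob Δ :=
    calc frob (V₂ᵀ * Δ) = frob ((V * Vᵀ - V₁ * V₁ᵀ) * Δ) := by
          rw [← hres, frob_mul_of_transpose_mul_self_eq_one hV₂]
      _ ≤ frob (V * Vᵀ - V₁ * V₁ᵀ) * frob Δ := frob_mul_le _ _
      _ ≤ (1 / 2) * frob Δ := mul_le_mul_of_nonneg_right hclose (frob_nonneg Δ)
  refine ⟨hupper, (pow_le_pow_iff_left₀ (by linarith [frob_nonneg Δ]) (frob_nonneg _)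
    two_ne_zero).1 ?_⟩
  have hpyth := frob_transpose_mul_sq_add_of_mul_transpose_add_eq_one hcomp Δ
  nlinarith [frob_nonneg (V₂ᵀ * Δ), frob_nonneg Δ]

/-- If the columns of `Δ` lie in the span of `V` and `‖VVᵀ − V₁V₁ᵀ‖_F ≤ 1/2`, then with
`V₂` completing `V₁`, we have `‖V₂ᵀΔ‖_F ≤ (1/2)‖Δ‖_F ≤ ‖V₁ᵀΔ‖_F`. -/
theorem projection_split_bound {d K : ℕ} (hK : 0 < K) (hKd : K < d)
    (V V₁ : Matrix (Fin d) (Fin K) ℝ) (V₂ : Matrix (Fin d) (Fin (d - K)) ℝ)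
    (Δ : Matrix (Fin d) (Fin K) ℝ)
    (hV : Vᵀ * V = 1) (hV₁ : V₁ᵀ * V₁ = 1) (hV₂ : V₂ᵀ * V₂ = 1)
    (hcomp : V₁ * V₁ᵀ + V₂ * V₂ᵀ = 1)
    (hΔ : V * Vᵀ * Δ = Δ)
    (hclose : frob (V * Vᵀ - V₁ * V₁ᵀ) ≤ 1 / 2) :
    frob (V₂ᵀ * Δ) ≤ (1 / 2) * frob Δ ∧ (1 / 2) * frob Δ ≤ frob (V₁ᵀ * Δ) :=
  projection_split_bound_general V V₁ V₂ Δ hV₂ hcomp hΔ hclose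
end

section
/- Let Σ be diagonal with all entries ≥ 1 in its top-left K×K block Σ₁ and all entries ≤ 1 in its lower block Σ₂, and suppose ‖V₂ᵀΔ_B‖_F ≤ ‖V₁ᵀΔ_B‖_F. Then for any l ≥ 0, (‖Σ₁^{l}V₁ᵀΔ_B‖_F² + ‖Σ₂^{l}V₂ᵀΔ_B‖_F²)/(‖Σ₁^{l+1}V₁ᵀΔ_B‖_F² + ‖Σ₂^{l+1}V₂ᵀΔ_B‖_F²) ≤ 2. -/
open Matrix

lemma frob_sq {a b : ℕ} (A : Matrix (Fin a) (Fin b) ℝ) :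
    frob A ^ 2 = ∑ i, ∑ j, (A i j) ^ 2 := by
  unfold frob
  rw [Real.sq_sqrt (by positivity)]

lemma pow_diag_mul_apply {a b n : ℕ} {S : Matrix (Fin a) (Fin a) ℝ} (hS : S.IsDiag)
    (M : Matrix (Fin a) (Fin b) ℝ) (i : Fin a) (j : Fin b) :
    (S ^ n * M) i j = (S i i) ^ n * M i j := by
  conv_lhs => rw [← hS.diagonal_diag, Matrix.diagonal_pow, Matrix.diagonal_mul]
  simp [Matrix.diag]

lemma frob_pow_sq {a b n : ℕ} {S : Matrix (Fin a) (Fin a) ℝ} (hS : S.IsDiag)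
    (M : Matrix (Fin a) (Fin b) ℝ) :
    frob (S ^ n * M) ^ 2 = ∑ i, ∑ j, ((S i i) ^ n) ^ 2 * (M i j) ^ 2 := by
  rw [frob_sq]
  refine Finset.sum_congr rfl fun i _ => Finset.sum_congr rfl fun j _ => ?_
  rw [pow_diag_mul_apply hS, mul_pow]

/-- If the diagonal block `Σ₁` has all entries `≥ 1`, the diagonal block `Σ₂` has entries
in `[0,1]`, and `‖V₂ᵀΔ_B‖_F ≤ ‖V₁ᵀΔ_B‖_F`, then the one-layer between-class energy
ratio is at most `2`. -/
theorem between_class_ratio_bound {d K m q l : ℕ}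
    (S₁ : Matrix (Fin K) (Fin K) ℝ) (S₂ : Matrix (Fin m) (Fin m) ℝ)
    (hS₁diag : S₁.IsDiag) (hS₂diag : S₂.IsDiag)
    (hS₁ge : ∀ i : Fin K, 1 ≤ S₁ i i)
    (hS₂mem : ∀ i : Fin m, 0 ≤ S₂ i i ∧ S₂ i i ≤ 1)
    (V₁ : Matrix (Fin d) (Fin K) ℝ) (V₂ : Matrix (Fin d) (Fin m) ℝ)
    (hV₁ : V₁ᵀ * V₁ = 1) (hV₂ : V₂ᵀ * V₂ = 1)
    (ΔB : Matrix (Fin d) (Fin q) ℝ)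
    (hyp : frob (V₂ᵀ * ΔB) ≤ frob (V₁ᵀ * ΔB)) :
    (frob (S₁ ^ l * V₁ᵀ * ΔB) ^ 2 + frob (S₂ ^ l * V₂ᵀ * ΔB) ^ 2) /
      (frob (S₁ ^ (l + 1) * V₁ᵀ * ΔB) ^ 2 + frob (S₂ ^ (l + 1) * V₂ᵀ * ΔB) ^ 2) ≤ 2 := by
  set M := V₁ᵀ * ΔB with hM
  set N := V₂ᵀ * ΔB with hN
  have hassoc₁ : ∀ n : ℕ, S₁ ^ n * V₁ᵀ * ΔB = S₁ ^ n * M := fun n => by rw [hM]; exact Matrix.mul_assoc _ _ _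
  have hassoc₂ : ∀ n : ℕ, S₂ ^ n * V₂ᵀ * ΔB = S₂ ^ n * N := fun n => by rw [hN]; exact Matrix.mul_assoc _ _ _
  rw [hassoc₁, hassoc₂, hassoc₁, hassoc₂]
  set A : ℕ → ℝ := fun n => frob (S₁ ^ n * M) ^ 2 with hA
  set B : ℕ → ℝ := fun n => frob (S₂ ^ n * N) ^ 2 with hB
  have hAmono : A l ≤ A (l + 1) := by
    simp only [hA, frob_pow_sq hS₁diag]
    refine Finset.sum_le_sum fun i _ => Finset.sum_le_sum fun j _ => ?_
    have h1 := hS₁ge i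
    have : (S₁ i i) ^ l ≤ (S₁ i i) ^ (l + 1) :=
      pow_le_pow_right₀ h1 (Nat.le_succ l)
    have hpnn : (0:ℝ) ≤ (S₁ i i) ^ l := pow_nonneg (by linarith) l
    exact mul_le_mul_of_nonneg_right (pow_le_pow_left₀ hpnn this 2) (sq_nonneg (M i j))
  have hBmono : B (l + 1) ≤ B 0 := by
    simp only [hB, frob_pow_sq hS₂diag]
    refine Finset.sum_le_sum fun i _ => Finset.sum_le_sum fun j _ => ?_
    obtain ⟨h0, h1⟩ := hS₂mem i
    have : (S₂ i i) ^ (l + 1) ≤ (S₂ i i) ^ 0 := pow_le_pow_of_le_one h0 h1 (Nat.zero_le _)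
    have hpnn : (0:ℝ) ≤ (S₂ i i) ^ (l + 1) := pow_nonneg h0 _
    exact mul_le_mul_of_nonneg_right (pow_le_pow_left₀ hpnn this 2) (sq_nonneg (N i j))
  have hBlmono : B l ≤ B 0 := by
    simp only [hB, frob_pow_sq hS₂diag]
    refine Finset.sum_le_sum fun i _ => Finset.sum_le_sum fun j _ => ?_
    obtain ⟨h0, h1⟩ := hS₂mem i
    have : (S₂ i i) ^ l ≤ (S₂ i i) ^ 0 := pow_le_pow_of_le_one h0 h1 (Nat.zero_le _)
    have hpnn : (0:ℝ) ≤ (S₂ i i) ^ l := pow_nonneg h0 _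
    exact mul_le_mul_of_nonneg_right (pow_le_pow_left₀ hpnn this 2) (sq_nonneg (N i j))
  have hA0mono : A 0 ≤ A (l + 1) := by
    simp only [hA, frob_pow_sq hS₁diag]
    refine Finset.sum_le_sum fun i _ => Finset.sum_le_sum fun j _ => ?_
    have h1 := hS₁ge i
    have : (S₁ i i) ^ 0 ≤ (S₁ i i) ^ (l + 1) := pow_le_pow_right₀ h1 (Nat.zero_le _)
    have hpnn : (0:ℝ) ≤ (S₁ i i) ^ 0 := by norm_num
    exact mul_le_mul_of_nonneg_right (pow_le_pow_left₀ hpnn this 2) (sq_nonneg (M i j))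
  have hB0A0 : B 0 ≤ A 0 := by
    have hNnn : 0 ≤ frob N := Real.sqrt_nonneg _
    have : frob (S₂ ^ 0 * N) = frob N := by rw [pow_zero, Matrix.one_mul]
    have h2 : frob (S₁ ^ 0 * M) = frob M := by rw [pow_zero, Matrix.one_mul]
    simp only [hA, hB, this, h2]
    exact pow_le_pow_left₀ hNnn hyp 2
  have hBnn : 0 ≤ B (l + 1) := sq_nonneg _
  have hnum : A l + B l ≤ 2 * (A (l + 1) + B (l + 1)) := by linarith
  rcases eq_or_lt_of_le (by positivity : (0:ℝ) ≤ A (l + 1) + B (l + 1)) with h | h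
  · rw [← h, div_zero]; norm_num
  · rw [div_le_iff₀ h]; exact hnum
end
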